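/- arXiv:2310.13601 — 5 statements merged into one kernel-verified Lean document; each statement's English description precedes it below -/
import Mathlib

section
/- Let V be a Banach space, E : V → [0,∞) be strictly convex and coercive, and let Y be a Banach space that is densely contained in dom E* ⊆ V* (with respect to the norm of V*), where E* denotes the convex conjugate of E. If A, B ∈ dom E satisfy ⟨A − B, Φ⟩ = 0 for all Φ ∈ Y, then A = B. -/
open NormedSpace

/-- Lemma 2.2.  Let `V` be a Banach space, `E : V → [0,∞)` strictly convex
and coercive, and let `Y` be a Banach space densely contained in `dom E* ⊆ V*` (via a
continuous linear embedding `j`), where `E*` is the convex conjugate of `E` (so that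
`dom E* = {z : V* | sup_v (⟨z,v⟩ − E v) < ∞}`).  If `A, B ∈ dom E = V` satisfy
`⟨A − B, Φ⟩ = 0` for all `Φ ∈ Y`, then `A = B`. -/
theorem eq_of_pairing_eq_zero_on_dense_subspace
    {V Y : Type*}
    [NormedAddCommGroup V] [NormedSpace ℝ V] [CompleteSpace V]
    [NormedAddCommGroup Y] [NormedSpace ℝ Y] [CompleteSpace Y]
    (E : V → ℝ) (hE_nonneg : ∀ v, 0 ≤ E v)
    (hE_strictConvex : StrictConvexOn ℝ Set.univ E)
    (hE_coercive : ∀ c : ℝ, ∃ R : ℝ, ∀ v : V, R ≤ ‖v‖ → c ≤ E v)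
    (j : Y →L[ℝ] StrongDual ℝ V) (hj_inj : Function.Injective j)
    (hj_mem : Set.range (j : Y → StrongDual ℝ V)
      ⊆ {z : StrongDual ℝ V | BddAbove (Set.range fun v : V => z v - E v)})
    (hj_dense : {z : StrongDual ℝ V | BddAbove (Set.range fun v : V => z v - E v)}
      ⊆ closure (Set.range (j : Y → StrongDual ℝ V)))
    (A B : V) (hAB : ∀ y : Y, j y (A - B) = 0) :
    A = B := by
  by_contra hne
  have hd : A - B ≠ 0 := sub_ne_zero.mpr hne
  obtain ⟨f, hf1, hf2⟩ := exists_dual_vector ℝ (A - B) (norm_ne_zero_iff.mpr hd)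
  -- coercivity radius
  obtain ⟨R₀, hR₀⟩ := hE_coercive (E 0 + 1)
  set R : ℝ := max R₀ 1 with hRdef
  have hR1 : (1 : ℝ) ≤ R := le_max_right _ _
  have hRpos : (0 : ℝ) < R := lt_of_lt_of_le one_pos hR1
  -- linear lower bound: E v ≥ ‖v‖/R - 1
  have hlow : ∀ v : V, ‖v‖ / R - 1 ≤ E v := by
    intro v
    rcases le_or_gt R ‖v‖ with hv | hv
    · have hvpos : (0 : ℝ) < ‖v‖ := lt_of_lt_of_le hRpos hv
      set t : ℝ := R / ‖v‖ with htdef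
      have ht0 : 0 < t := div_pos hRpos hvpos
      have ht1 : t ≤ 1 := (div_le_one hvpos).mpr hv
      have hnorm : ‖t • v‖ = R := by
        rw [norm_smul, Real.norm_eq_abs, abs_of_pos ht0]
        exact div_mul_cancel₀ _ (ne_of_gt hvpos)
      have hEtv : E 0 + 1 ≤ E (t • v) := by
        apply hR₀
        rw [hnorm]; exact le_max_left _ _
      have hconv := hE_strictConvex.convexOn.2 (Set.mem_univ v) (Set.mem_univ (0 : V))
        (le_of_lt ht0) (by linarith : (0:ℝ) ≤ 1 - t) (by ring)
      rw [smul_zero, add_zero] at hconv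
      simp only [smul_eq_mul] at hconv
      have h1t : (1 - t) * E 0 ≤ E 0 :=
        mul_le_of_le_one_left (hE_nonneg 0) (by linarith)
      have : 1 ≤ t * E v := by linarith
      have hEv : 1 / t ≤ E v := by
        rw [div_le_iff₀ ht0, mul_comm]; linarith
      have : ‖v‖ / R = 1 / t := by
        rw [htdef]; field_simp
      rw [this]; linarith
    · have : ‖v‖ / R ≤ 1 := (div_le_one hRpos).mpr (le_of_lt hv)
      have := hE_nonneg v
      linarith
  -- the functional z = (1/R) • f lies in dom E*
  set z : StrongDual ℝ V := (1 / R) • f with hzdef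
  have hz_mem : BddAbove (Set.range fun v : V => z v - E v) := by
    refine ⟨1, ?_⟩
    rintro x ⟨v, rfl⟩
    have h1 : z v ≤ ‖v‖ / R := by
      have : z v = (1 / R) * f v := rfl
      rw [this]
      have hfv : f v ≤ ‖v‖ := by
        calc f v ≤ |f v| := le_abs_self _
        _ ≤ ‖f‖ * ‖v‖ := by
            rw [← Real.norm_eq_abs]; exact f.le_opNorm v
        _ = ‖v‖ := by rw [hf1, one_mul]
      have h1R : 0 ≤ 1 / R := by positivity
      calc (1 / R) * f v ≤ (1 / R) * ‖v‖ := by nlinarith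
        _ = ‖v‖ / R := by ring
    have := hlow v
    simp only []
    linarith
  -- hence z is in the closure of range j, so z (A - B) = 0
  have hz_cl : z ∈ closure (Set.range (j : Y → StrongDual ℝ V)) := hj_dense hz_mem
  have heval_cont : Continuous fun w : StrongDual ℝ V => w (A - B) :=
    (ContinuousLinearMap.apply ℝ ℝ (A - B)).continuous
  have hzero : Set.EqOn (fun w : StrongDual ℝ V => w (A - B)) (fun _ => (0 : ℝ))
      (closure (Set.range (j : Y → StrongDual ℝ V))) := by
    apply Set.EqOn.closure _ heval_cont continuous_const
    rintro w ⟨y, rfl⟩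
    exact hAB y
  have hz0 : z (A - B) = 0 := hzero hz_cl
  have : z (A - B) = (1 / R) * ‖A - B‖ := by
    rw [hzdef]; simp [hf2]
  rw [this] at hz0
  have hABpos : 0 < ‖A - B‖ := norm_pos_iff.mpr hd
  have : 0 < (1 / R) * ‖A - B‖ := by positivity
  linarith
end

section
/- Let V be a Banach space and E : V → [0,∞] be convex and ρ-uniformly convex, i.e. there is a strictly increasing function ρ : [0,∞) → [0,∞) with ρ(0) = 0 such that 2E((U+V)/2) ≤ E(U) + E(V) − ρ(‖U − V‖_V) for all U, V ∈ dom E. Let (U_n) ⊂ dom E converge weakly to U ∈ dom E in V, assume E(U_n) → E(U) < ∞, and assume the subdifferential ∂E(U) is nonempty. Then U_n → U strongly in V, i.e. ‖U_n − U‖_V → 0. -/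
open Filter

/-- Let `V` be a Banach space and `E : V → [0,∞]` (modelled by its
effective domain `domE` together with a real-valued function `E` on it) be convex and
`ρ`-uniformly convex.  If `(Uₙ) ⊆ dom E` converges weakly to `U ∈ dom E`, `E(Uₙ) → E(U)`,
and the subdifferential `∂E(U)` is nonempty, then `Uₙ → U` strongly in `V`. -/
theorem strong_convergence_of_uniformly_convex_energy
    {V : Type*} [NormedAddCommGroup V] [NormedSpace ℝ V] [CompleteSpace V]
    (domE : Set V) (E : V → ℝ)
    (hE_nonneg : ∀ v ∈ domE, 0 ≤ E v)
    (hE_convex : ConvexOn ℝ domE E)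
    (ρ : ℝ → ℝ)
    (hρ_mono : StrictMonoOn ρ (Set.Ici 0))
    (hρ_zero : ρ 0 = 0)
    (hρ_nonneg : ∀ x : ℝ, 0 ≤ x → 0 ≤ ρ x)
    (hρ_uniform : ∀ u ∈ domE, ∀ v ∈ domE,
      2 * E ((1 / 2 : ℝ) • (u + v)) ≤ E u + E v - ρ ‖u - v‖)
    (Un : ℕ → V) (U : V)
    (hUn_mem : ∀ n, Un n ∈ domE) (hU_mem : U ∈ domE)
    (hweak : ∀ φ : StrongDual ℝ V,
      Tendsto (fun n => φ (Un n)) atTop (nhds (φ U)))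
    (hE_conv : Tendsto (fun n => E (Un n)) atTop (nhds (E U)))
    (hsubdiff : ∃ z : StrongDual ℝ V, ∀ y ∈ domE, E U + z (y - U) ≤ E y) :
    Tendsto (fun n => ‖Un n - U‖) atTop (nhds 0) := by
  obtain ⟨z, hz⟩ := hsubdiff
  -- midpoints are in domE
  have hmid : ∀ n, ((1 / 2 : ℝ) • (Un n + U)) ∈ domE := by
    intro n
    have := hE_convex.1 (hUn_mem n) hU_mem (by norm_num : (0:ℝ) ≤ 1/2)
      (by norm_num : (0:ℝ) ≤ 1/2) (by norm_num)
    simpa [smul_add] using this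
  -- key bound
  have hkey : ∀ n, ρ ‖Un n - U‖ ≤ E (Un n) - E U - z (Un n - U) := by
    intro n
    have h1 := hρ_uniform (Un n) (hUn_mem n) U hU_mem
    have h2 := hz _ (hmid n)
    have h3 : z (((1 / 2 : ℝ) • (Un n + U)) - U) = (1/2 : ℝ) * z (Un n - U) := by
      have : ((1 / 2 : ℝ) • (Un n + U)) - U = (1/2 : ℝ) • (Un n - U) := by
        rw [smul_add]; module
      rw [this, map_smul]; rfl
    rw [h3] at h2
    nlinarith [h1, h2]
  -- the RHS tends to 0
  have hzt : Tendsto (fun n => z (Un n - U)) atTop (nhds 0) := by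
    have := (hweak z).sub_const (z U)
    simpa [map_sub] using this
  have hrhs : Tendsto (fun n => E (Un n) - E U - z (Un n - U)) atTop (nhds 0) := by
    have := (hE_conv.sub_const (E U)).sub hzt
    simpa using this
  -- squeeze: ρ ‖Un n - U‖ → 0
  have hρt : Tendsto (fun n => ρ ‖Un n - U‖) atTop (nhds 0) := by
    refine squeeze_zero (fun n => hρ_nonneg _ (norm_nonneg _)) hkey hrhs
  -- conclude
  rw [Metric.tendsto_atTop]
  intro ε hε
  have hρε : 0 < ρ ε := by
    have := hρ_mono Set.self_mem_Ici (le_of_lt hε) hε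
    linarith
  have := (Metric.tendsto_atTop.mp hρt) (ρ ε) hρε
  obtain ⟨N, hN⟩ := this
  refine ⟨N, fun n hn => ?_⟩
  have h := hN n hn
  rw [Real.dist_eq, sub_zero, abs_of_nonneg (hρ_nonneg _ (norm_nonneg _))] at h
  rw [Real.dist_eq, sub_zero, abs_of_nonneg (norm_nonneg _)]
  by_contra hcon
  push_neg at hcon
  have : ρ ε ≤ ρ ‖Un n - U‖ :=
    (hρ_mono.monotoneOn (le_of_lt hε) (norm_nonneg _)) hcon
  linarith
end

section
/- Let d ≥ 1, β ∈ (0,1), and let σ be a real symmetric d×d matrix. Set M := (σ − (1−2β)I)/(2β) and define B(σ) := M + (M² + ((1−β)/β)I)^{1/2}, where (·)^{1/2} denotes the positive semidefinite square root of the symmetric positive definite matrix M² + ((1−β)/β)I. Then B(σ) is symmetric positive definite and satisfies β B(σ)² − (σ − (1−2β)I) B(σ) − (1−β)I = 0; equivalently, σ = (1−β)(I − B(σ)^{−1}) + β(B(σ) − I). -/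
open Matrix

/-- The positive semidefinite square root of a positive semidefinite matrix, as defined in
Mathlib of December 2024 (`Matrix.PosSemidef.sqrt`), which has since been removed. -/
noncomputable def Matrix.PosSemidef.sqrt {n : Type*} [Fintype n] [DecidableEq n] {𝕜 : Type*}
    [RCLike 𝕜] [PartialOrder 𝕜] {A : Matrix n n 𝕜} (hA : A.PosSemidef) : Matrix n n 𝕜 :=
  hA.1.eigenvectorUnitary.1 * diagonal ((↑) ∘ (Real.sqrt ·) ∘ hA.1.eigenvalues) *
    (star hA.1.eigenvectorUnitary : Matrix n n 𝕜)

/-- Let `β ∈ (0,1)` and `σ` a real symmetric `d × d` matrix.  With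
`M := (σ − (1−2β)I)/(2β)`, the matrix `B(σ) := M + (M² + ((1−β)/β) I)^{1/2}` (positive
semidefinite square root) is symmetric positive definite and satisfies
`β B(σ)² − (σ − (1−2β)I) B(σ) − (1−β) I = 0`; equivalently
`σ = (1−β)(I − B(σ)⁻¹) + β (B(σ) − I)`. -/
theorem Bmap_posDef_and_solves {d : ℕ} (hd : 1 ≤ d) (β : ℝ) (hβ : β ∈ Set.Ioo (0 : ℝ) 1)
    (σ : Matrix (Fin d) (Fin d) ℝ) (hσ : σ.IsHermitian) :
    ∃ hP : (((2 * β)⁻¹ • (σ - (1 - 2 * β) • (1 : Matrix (Fin d) (Fin d) ℝ))) ^ 2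
        + ((1 - β) / β) • (1 : Matrix (Fin d) (Fin d) ℝ)).PosSemidef,
      ∀ Bσ : Matrix (Fin d) (Fin d) ℝ,
        Bσ = (2 * β)⁻¹ • (σ - (1 - 2 * β) • (1 : Matrix (Fin d) (Fin d) ℝ)) + hP.sqrt →
        Bσ.PosDef ∧
        β • Bσ ^ 2 - (σ - (1 - 2 * β) • (1 : Matrix (Fin d) (Fin d) ℝ)) * Bσ
            - (1 - β) • (1 : Matrix (Fin d) (Fin d) ℝ) = 0 ∧
        σ = (1 - β) • ((1 : Matrix (Fin d) (Fin d) ℝ) - Bσ⁻¹) + β • (Bσ - 1) := by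
  obtain ⟨hβ0, hβ1⟩ := hβ
  have h2β : (0:ℝ) < 2 * β := by linarith
  haveI : Nonempty (Fin d) := ⟨⟨0, hd⟩⟩
  set U : Matrix (Fin d) (Fin d) ℝ := (hσ.eigenvectorUnitary : Matrix (Fin d) (Fin d) ℝ) with hUdef
  have hU1 : U * Uᴴ = 1 := Matrix.mem_unitaryGroup_iff.mp hσ.eigenvectorUnitary.2
  have hU2 : Uᴴ * U = 1 := Matrix.mem_unitaryGroup_iff'.mp hσ.eigenvectorUnitary.2
  set C : (Fin d → ℝ) → Matrix (Fin d) (Fin d) ℝ := fun f => U * diagonal f * Uᴴ with hCdef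
  have hCmul : ∀ f g, C f * C g = C fun i => f i * g i := by
    intro f g
    simp only [hCdef, Matrix.mul_assoc]
    rw [← Matrix.mul_assoc Uᴴ U, hU2, Matrix.one_mul, ← Matrix.mul_assoc (diagonal f),
      diagonal_mul_diagonal]
  have hCone : C (fun _ => 1) = 1 := by
    simp only [hCdef, diagonal_one, Matrix.mul_one, hU1]
  have hCzero : C (fun _ => 0) = 0 := by
    simp [hCdef]
  have hCadd : ∀ f g, C f + C g = C fun i => f i + g i := by
    intro f g
    simp only [hCdef, ← Matrix.add_mul, ← Matrix.mul_add, diagonal_add]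
  have hCsub : ∀ f g, C f - C g = C fun i => f i - g i := by
    intro f g
    simp only [hCdef, ← Matrix.sub_mul, ← Matrix.mul_sub, diagonal_sub]
  have hCsmul : ∀ (r : ℝ) f, r • C f = C fun i => r * f i := by
    intro r f
    show r • (U * diagonal f * Uᴴ) = U * diagonal (fun i => r * f i) * Uᴴ
    have : (fun i => r * f i) = r • f := rfl
    rw [this, diagonal_smul, Matrix.mul_smul, Matrix.smul_mul]
  have hCpsd : ∀ f, (∀ i, 0 ≤ f i) → (C f).PosSemidef := by
    intro f hf
    exact (posSemidef_diagonal_iff.mpr hf).mul_mul_conjTranspose_same U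
  have hσeq : σ = C hσ.eigenvalues := by
    have := hσ.spectral_theorem
    simpa [hCdef, star_eq_conjTranspose, RCLike.ofReal_real_eq_id, Function.comp] using this
  -- scalar data
  set ev : Fin d → ℝ := hσ.eigenvalues with hevdef
  set m : Fin d → ℝ := fun i => (2 * β)⁻¹ * (ev i - (1 - 2 * β)) with hmdef
  set c : ℝ := (1 - β) / β with hcdef
  have hcpos : 0 < c := by rw [hcdef]; apply div_pos <;> linarith
  set s : Fin d → ℝ := fun i => Real.sqrt (m i ^ 2 + c) with hsdef
  have hs_sq : ∀ i, s i ^ 2 = m i ^ 2 + c := fun i =>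
    Real.sq_sqrt (add_nonneg (sq_nonneg _) hcpos.le)
  have hs_nonneg : ∀ i, 0 ≤ s i := fun i => Real.sqrt_nonneg _
  set b : Fin d → ℝ := fun i => m i + s i with hbdef
  have hbpos : ∀ i, 0 < b i := by
    intro i
    have h1 : |m i| < s i := by
      rw [hsdef]
      calc |m i| = Real.sqrt (m i ^ 2) := (Real.sqrt_sq_eq_abs _).symm
        _ < Real.sqrt (m i ^ 2 + c) := Real.sqrt_lt_sqrt (sq_nonneg _)
            (lt_add_of_pos_right _ hcpos)
    have h2 := (abs_lt.mp h1).1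
    simp only [hbdef]
    linarith
  -- matrix identities
  have hone : (1 : Matrix (Fin d) (Fin d) ℝ) = C (fun _ => 1) := hCone.symm
  have hMeq : (2 * β)⁻¹ • (σ - (1 - 2 * β) • (1 : Matrix (Fin d) (Fin d) ℝ)) = C m := by
    rw [hσeq, hone, hCsmul, hCsub, hCsmul]
    refine congrArg C (funext fun i => ?_)
    simp only [hmdef]
    ring
  have hβc : β * c = 1 - β := by
    rw [hcdef]; field_simp
  have hAeq : ((2 * β)⁻¹ • (σ - (1 - 2 * β) • (1 : Matrix (Fin d) (Fin d) ℝ))) ^ 2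
      + ((1 - β) / β) • (1 : Matrix (Fin d) (Fin d) ℝ) = C (fun i => m i ^ 2 + c) := by
    rw [hMeq, pow_two, hCmul, hone, hCsmul, hCadd]
    refine congrArg C (funext fun i => ?_)
    simp only [hcdef]
    ring
  have hP : (((2 * β)⁻¹ • (σ - (1 - 2 * β) • (1 : Matrix (Fin d) (Fin d) ℝ))) ^ 2
      + ((1 - β) / β) • (1 : Matrix (Fin d) (Fin d) ℝ)).PosSemidef := by
    rw [hAeq]
    exact hCpsd _ fun i => add_nonneg (sq_nonneg _) hcpos.le
  refine ⟨hP, ?_⟩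
  have hsqrt : hP.sqrt = C s := by
    have hTpsd : (C s).PosSemidef := hCpsd _ hs_nonneg
    have hT2 : (C s) ^ 2 = ((2 * β)⁻¹ • (σ - (1 - 2 * β) • (1 : Matrix (Fin d) (Fin d) ℝ))) ^ 2
        + ((1 - β) / β) • (1 : Matrix (Fin d) (Fin d) ℝ) := by
      rw [hAeq, pow_two, hCmul]
      refine congrArg C (funext fun i => ?_)
      rw [← hs_sq i]
      ring
    have hcf : hP.sqrt = cfc Real.sqrt (((2 * β)⁻¹ • (σ - (1 - 2 * β) • (1 : Matrix (Fin d) (Fin d) ℝ))) ^ 2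
        + ((1 - β) / β) • (1 : Matrix (Fin d) (Fin d) ℝ)) := by
      rw [hP.1.cfc_eq]
      simp [Matrix.PosSemidef.sqrt, IsHermitian.cfc, Unitary.conjStarAlgAut_apply]
    rw [hcf, ← hT2, ← cfc_comp_pow Real.sqrt 2 (C s) (ha := hTpsd.1.isSelfAdjoint)]
    rw [cfc_congr (g := fun x => x) ?_, cfc_id' ℝ (C s) hTpsd.1.isSelfAdjoint]
    intro x hx
    have hx0 := (posSemidef_iff_isHermitian_and_spectrum_nonneg.mp hTpsd).2 hx
    exact Real.sqrt_sq hx0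
  intro Bσ hBσ
  have hB : Bσ = C b := by
    rw [hBσ, hsqrt, hMeq, hCadd]
  -- scalar quadratic identity
  have hquad : ∀ i, β * (b i * b i) - (2 * β * m i) * b i - (1 - β) = 0 := by
    intro i
    simp only [hbdef]
    linear_combination β * hs_sq i + hβc
  have hσshift : σ - (1 - 2 * β) • (1 : Matrix (Fin d) (Fin d) ℝ)
      = C (fun i => 2 * β * m i) := by
    rw [hσeq, hone, hCsmul, hCsub]
    refine congrArg C (funext fun i => ?_)
    simp only [hmdef]
    rw [← mul_assoc, mul_inv_cancel₀ h2β.ne', one_mul]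
    ring
  refine ⟨?_, ?_, ?_⟩
  · -- PosDef
    obtain ⟨i0, -, hi0⟩ := Finset.exists_min_image Finset.univ b ⟨Classical.arbitrary _,
      Finset.mem_univ _⟩
    have hr : 0 < b i0 := hbpos i0
    have hsplit : C b = C (fun i => b i - b i0) + (b i0) • (1 : Matrix (Fin d) (Fin d) ℝ) := by
      rw [hone, hCsmul, hCadd]
      refine congrArg C (funext fun i => ?_)
      ring
    rw [hB, hsplit]
    refine Matrix.PosDef.posSemidef_add (hCpsd _ fun i => ?_) ?_
    · have := hi0 i (Finset.mem_univ i); linarith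
    · rw [smul_one_eq_diagonal]
      exact PosDef.diagonal fun _ => hr
  · -- quadratic matrix equation
    rw [hB, hσshift, pow_two, hCmul, hCsmul, hCmul, hone, hCsmul, hCsub, hCsub]
    have h0 : (fun i => β * (b i * b i) - (2 * β * m i) * b i - (1 - β) * 1)
        = (fun _ : Fin d => (0:ℝ)) := by
      funext i
      have := hquad i
      linarith
    calc C (fun i => β * (b i * b i) - (2 * β * m i) * b i - (1 - β) * 1)
        = C (fun _ => 0) := by rw [h0]
      _ = 0 := hCzero
  · -- fixed point form
    have hBinv : Bσ⁻¹ = C (fun i => (b i)⁻¹) := by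
      apply Matrix.inv_eq_right_inv
      rw [hB, hCmul, ← hCone]
      exact congrArg C (funext fun i => mul_inv_cancel₀ (hbpos i).ne')
    rw [hBinv, hB, hσeq, hone, hCsub, hCsmul, hCsub, hCsmul, hCadd]
    refine congrArg C (funext fun i => ?_)
    have hb := (hbpos i).ne'
    have hq := hquad i
    have hev : ev i = 2 * β * m i + (1 - 2 * β) := by
      simp only [hmdef]
      rw [← mul_assoc, mul_inv_cancel₀ h2β.ne', one_mul]
      ring
    refine mul_left_cancel₀ hb ?_
    rw [hev]
    have h1 : b i * (b i)⁻¹ = 1 := mul_inv_cancel₀ hb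
    linear_combination (-1 : ℝ) * hq + (1 - β) * h1
end

section
/- Let S be a real symmetric positive definite 3×3 matrix and H a real skew-symmetric 3×3 matrix. Set I_S := tr(S), II_S := ½((tr S)² − tr(S²)), III_S := det S. Then I_S·II_S − III_S > 0, and with f := (I_S² − II_S)/(I_S·II_S − III_S) and g := 1/(I_S·II_S − III_S), the matrix A := f·H − g·(S²H + H S²) is skew-symmetric and satisfies A S + S A = H. -/
open Matrix

set_option maxHeartbeats 1600000 in
theorem key_explicit (a b c d e f p q r : ℝ) :
    ((!![a,b,c;b,d,e;c,e,f] : Matrix (Fin 3) (Fin 3) ℝ) * !![a,b,c;b,d,e;c,e,f] * !![0,p,q;-p,0,r;-q,-r,0]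
      + !![0,p,q;-p,0,r;-q,-r,0] * (!![a,b,c;b,d,e;c,e,f] * !![a,b,c;b,d,e;c,e,f])) * !![a,b,c;b,d,e;c,e,f]
      + !![a,b,c;b,d,e;c,e,f] * (!![a,b,c;b,d,e;c,e,f] * !![a,b,c;b,d,e;c,e,f] * !![0,p,q;-p,0,r;-q,-r,0]
          + !![0,p,q;-p,0,r;-q,-r,0] * (!![a,b,c;b,d,e;c,e,f] * !![a,b,c;b,d,e;c,e,f]))
    = ((a+d+f)^2 - ((a*d - b*b) + (a*f - c*c) + (d*f - e*e)))
        • (!![0,p,q;-p,0,r;-q,-r,0] * !![a,b,c;b,d,e;c,e,f] + !![a,b,c;b,d,e;c,e,f] * !![0,p,q;-p,0,r;-q,-r,0])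
      + ((a*d*f + 2*b*c*e - a*e*e - d*c*c - f*b*b) - (a+d+f)*((a*d - b*b) + (a*f - c*c) + (d*f - e*e)))
        • !![0,p,q;-p,0,r;-q,-r,0] := by
  ext i j
  fin_cases i <;> fin_cases j <;>
    · simp [Matrix.mul_apply, Fin.sum_univ_three]
      ring

set_option maxHeartbeats 1600000 in
/-- Let `S` be a real symmetric positive definite `3 × 3` matrix and `H` a
real skew-symmetric `3 × 3` matrix.  With the invariants `I_S = tr S`,
`II_S = ((tr S)² − tr S²)/2`, `III_S = det S` one has `I_S · II_S − III_S > 0`, and the matrix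
`A := f • H − g • (S² H + H S²)`, where `f = (I_S² − II_S)/(I_S · II_S − III_S)` and
`g = 1/(I_S · II_S − III_S)`, is skew-symmetric and solves `A S + S A = H`. -/
theorem skew_solution_of_tensor_equation
    (S H : Matrix (Fin 3) (Fin 3) ℝ) (hS : S.PosDef) (hH : Hᵀ = -H) :
    0 < S.trace * ((S.trace ^ 2 - (S ^ 2).trace) / 2) - S.det ∧
    (letI IS : ℝ := S.trace
     letI IIS : ℝ := (S.trace ^ 2 - (S ^ 2).trace) / 2
     letI IIIS : ℝ := S.det
     letI f : ℝ := (IS ^ 2 - IIS) / (IS * IIS - IIIS)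
     letI g : ℝ := 1 / (IS * IIS - IIIS)
     letI A : Matrix (Fin 3) (Fin 3) ℝ := f • H - g • (S ^ 2 * H + H * S ^ 2)
     Aᵀ = -A ∧ A * S + S * A = H) := by
  -- symmetry of S
  have hA := hS.1
  have hs : Sᵀ = S := by
    ext i j
    have := congrFun (congrFun hA i) j
    simpa using this
  -- eigenvalue facts
  have hspec := hA.spectral_theorem
  simp only [Unitary.conjStarAlgAut_apply, Unitary.coe_star] at hspec
  set U : Matrix (Fin 3) (Fin 3) ℝ := (hA.eigenvectorUnitary : Matrix (Fin 3) (Fin 3) ℝ) with hU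
  have hsU : star U * U = 1 := by
    rw [hU]
    exact congrArg Subtype.val (Unitary.star_mul_self hA.eigenvectorUnitary)
  have e1 : S.trace = hA.eigenvalues 0 + hA.eigenvalues 1 + hA.eigenvalues 2 := by
    conv_lhs => rw [hspec]
    rw [Matrix.trace_mul_cycle, hsU, Matrix.one_mul]
    simp [Matrix.trace_diagonal, Fin.sum_univ_three]
  have e2 : (S ^ 2).trace
      = hA.eigenvalues 0 ^ 2 + hA.eigenvalues 1 ^ 2 + hA.eigenvalues 2 ^ 2 := by
    conv_lhs => rw [hspec]
    rw [show (U * diagonal (RCLike.ofReal ∘ hA.eigenvalues) * star U)^2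
      = U * (diagonal (RCLike.ofReal ∘ hA.eigenvalues) * diagonal (RCLike.ofReal ∘ hA.eigenvalues)) * star U by
        rw [pow_two, Matrix.mul_assoc, Matrix.mul_assoc, Matrix.mul_assoc, Matrix.mul_assoc];
        rw [← Matrix.mul_assoc (star U) U, hsU, Matrix.one_mul]; simp only [Matrix.mul_assoc]]
    rw [Matrix.trace_mul_cycle, hsU, Matrix.one_mul, diagonal_mul_diagonal]
    simp [Matrix.trace_diagonal, Fin.sum_univ_three, pow_two]
  have e3 : S.det = hA.eigenvalues 0 * hA.eigenvalues 1 * hA.eigenvalues 2 := by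
    rw [hA.det_eq_prod_eigenvalues]
    simp [Fin.prod_univ_three]
  have hl0 := hS.eigenvalues_pos 0
  have hl1 := hS.eigenvalues_pos 1
  have hl2 := hS.eigenvalues_pos 2
  have hpos : 0 < S.trace * ((S.trace ^ 2 - (S ^ 2).trace) / 2) - S.det := by
    rw [e1, e2, e3]
    nlinarith [mul_pos (mul_pos (add_pos hl0 hl1) (add_pos hl1 hl2)) (add_pos hl2 hl0)]
  refine ⟨hpos, ?_, ?_⟩
  · -- skew-symmetry of A
    rw [transpose_sub, transpose_smul, transpose_smul, transpose_add, transpose_mul,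
      transpose_mul, transpose_pow, hs, hH]
    simp only [Matrix.mul_neg, Matrix.neg_mul]
    module
  · -- the equation A S + S A = H
    -- entry facts
    have s10 : S 1 0 = S 0 1 := congrFun (congrFun hs 0) 1
    have s20 : S 2 0 = S 0 2 := congrFun (congrFun hs 0) 2
    have s21 : S 2 1 = S 1 2 := congrFun (congrFun hs 1) 2
    have h00 : H 0 0 = 0 := by
      have := congrFun (congrFun hH 0) 0
      simp only [transpose_apply, Matrix.neg_apply] at this; linarith
    have h11 : H 1 1 = 0 := by
      have := congrFun (congrFun hH 1) 1
      simp only [transpose_apply, Matrix.neg_apply] at this; linarith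
    have h22 : H 2 2 = 0 := by
      have := congrFun (congrFun hH 2) 2
      simp only [transpose_apply, Matrix.neg_apply] at this; linarith
    have h10 : H 1 0 = -H 0 1 := congrFun (congrFun hH 0) 1
    have h20 : H 2 0 = -H 0 2 := congrFun (congrFun hH 0) 2
    have h21 : H 2 1 = -H 1 2 := congrFun (congrFun hH 1) 2
    set a := S 0 0 with ha
    set b := S 0 1 with hb
    set c := S 0 2 with hc
    set d := S 1 1 with hd
    set e := S 1 2 with he
    set f := S 2 2 with hf
    set p := H 0 1 with hp
    set q := H 0 2 with hq
    set r := H 1 2 with hr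
    have hSe : S = !![a,b,c;b,d,e;c,e,f] := by
      ext i j
      fin_cases i <;> fin_cases j <;>
        simp [ha, hb, hc, hd, he, hf, s10, s20, s21]
    have hHe : H = !![0,p,q;-p,0,r;-q,-r,0] := by
      ext i j
      fin_cases i <;> fin_cases j <;>
        simp [hp, hq, hr, h00, h11, h22, h10, h20, h21]
    have htr : S.trace = a + d + f := by
      simp [Matrix.trace_fin_three, ha, hd, hf]
    have htr2 : (S ^ 2).trace
        = (a*a + b*b + c*c) + (b*b + d*d + e*e) + (c*c + e*e + f*f) := by
      simp [Matrix.trace_fin_three, pow_two, Matrix.mul_apply, Fin.sum_univ_three,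
        s10, s20, s21, ha, hb, hc, hd, he, hf]
    have hdet : S.det = a*d*f + 2*b*c*e - a*e*e - d*c*c - f*b*b := by
      rw [Matrix.det_fin_three, s10, s20, s21]
      ring
    have hd0 : S.trace * ((S.trace ^ 2 - (S ^ 2).trace) / 2) - S.det ≠ 0 := hpos.ne'
    rw [htr, htr2, hdet] at hd0 ⊢
    rw [hSe, hHe]
    simp only [pow_two]
    have hkey := key_explicit a b c d e f p q r
    have expand : ∀ (F G : ℝ) (M N : Matrix (Fin 3) (Fin 3) ℝ),
        (F • N - G • (M * M * N + N * (M * M))) * M + M * (F • N - G • (M * M * N + N * (M * M)))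
          = F • (N * M + M * N)
            - G • ((M * M * N + N * (M * M)) * M + M * (M * M * N + N * (M * M))) := by
      intro F G M N
      simp only [Matrix.sub_mul, Matrix.mul_sub, Matrix.add_mul, Matrix.mul_add,
        Matrix.smul_mul, Matrix.mul_smul, smul_add, smul_sub]
      abel
    have hD : a * d * f * 4 + a * d ^ 2 * 2 + a * f ^ 2 * 2 + (-(a * b ^ 2 * 2) - a * c ^ 2 * 2)
        + a ^ 2 * d * 2 + a ^ 2 * f * 2 + d * f ^ 2 * 2 + (-(d * b ^ 2 * 2) - d * e ^ 2 * 2)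
        + (d ^ 2 * f * 2 - f * c ^ 2 * 2) + (-(f * e ^ 2 * 2) - b * c * e * 4) ≠ 0 := by
      intro h
      exact hd0 (by linear_combination h / 2)
    rw [expand, hkey]
    match_scalars <;> field_simp [hd0] <;> try ring
    rw [← mul_inv_cancel₀ hD]
    ring
end

section
/- Let d ≥ 1 and let B and B̃ be real symmetric invertible d×d matrices. Then the following two trace identities hold: (1) tr( B(I − B^{−1})² − B̃(I − B̃^{−1})² − [ (I − B̃^{−1})² + 2(I − B̃^{−1})B̃^{−1} ](B − B̃) ) = tr( B̃^{−1}( B̃ B^{−1} − 2I + (B̃ B^{−1})^{−1} ) ); and (2) tr( B(B − I)² − B̃(B̃ − I)² − [ (B̃ − I)² + 2B̃(B̃ − I) ](B − B̃) ) = tr( (B + 2B̃ − 2I)(B − B̃)² ). -/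
open Matrix

/-- For real symmetric invertible `d × d` matrices `B` and `B̃` the two
trace identities used in the relative energy computation hold:
`tr(B(I−B⁻¹)² − B̃(I−B̃⁻¹)² − [(I−B̃⁻¹)² + 2(I−B̃⁻¹)B̃⁻¹](B−B̃)) = tr(B̃⁻¹(B̃B⁻¹ − 2I + (B̃B⁻¹)⁻¹))`
and
`tr(B(B−I)² − B̃(B̃−I)² − [(B̃−I)² + 2B̃(B̃−I)](B−B̃)) = tr((B + 2B̃ − 2I)(B−B̃)²)`. -/
theorem relative_energy_trace_identities {d : ℕ} (hd : 1 ≤ d)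
    (B Bt : Matrix (Fin d) (Fin d) ℝ)
    (hB : B.IsHermitian) (hBt : Bt.IsHermitian)
    (hBu : IsUnit B.det) (hBtu : IsUnit Bt.det) :
    (B * (1 - B⁻¹) ^ 2 - Bt * (1 - Bt⁻¹) ^ 2
        - ((1 - Bt⁻¹) ^ 2 + (2 : ℝ) • ((1 - Bt⁻¹) * Bt⁻¹)) * (B - Bt)).trace
      = (Bt⁻¹ * (Bt * B⁻¹ - (2 : ℝ) • (1 : Matrix (Fin d) (Fin d) ℝ)
          + (Bt * B⁻¹)⁻¹)).trace ∧
    (B * (B - 1) ^ 2 - Bt * (Bt - 1) ^ 2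
        - ((Bt - 1) ^ 2 + (2 : ℝ) • (Bt * (Bt - 1))) * (B - Bt)).trace
      = ((B + (2 : ℝ) • Bt - (2 : ℝ) • (1 : Matrix (Fin d) (Fin d) ℝ))
          * (B - Bt) ^ 2).trace := by
  constructor
  · have h1 : B * B⁻¹ = 1 := mul_nonsing_inv B hBu
    have h2 : B⁻¹ * B = 1 := nonsing_inv_mul B hBu
    have h3 : Bt * Bt⁻¹ = 1 := mul_nonsing_inv Bt hBtu
    have h4 : Bt⁻¹ * Bt = 1 := nonsing_inv_mul Bt hBtu
    have h5 : (Bt * B⁻¹)⁻¹ = B * Bt⁻¹ := by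
      rw [Matrix.mul_inv_rev, Matrix.nonsing_inv_nonsing_inv B hBu]
    rw [h5]
    have h6 : Bt⁻¹ * Bt⁻¹ * Bt = Bt⁻¹ := by rw [Matrix.mul_assoc, h4, mul_one]
    have e1 : B * (1 - B⁻¹) ^ 2 - Bt * (1 - Bt⁻¹) ^ 2
          - ((1 - Bt⁻¹) ^ 2 + (2 : ℝ) • ((1 - Bt⁻¹) * Bt⁻¹)) * (B - Bt)
        = B⁻¹ - (2:ℝ) • Bt⁻¹ + Bt⁻¹ * Bt⁻¹ * B := by
      simp only [pow_two, mul_sub, sub_mul, mul_add, add_mul, mul_one, one_mul,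
        smul_mul_assoc, ← Matrix.mul_assoc, h1, h2, h3, h4, h6]
      module
    have e2 : Bt⁻¹ * (Bt * B⁻¹ - (2 : ℝ) • (1 : Matrix (Fin d) (Fin d) ℝ) + B * Bt⁻¹)
        = B⁻¹ - (2:ℝ) • Bt⁻¹ + Bt⁻¹ * B * Bt⁻¹ := by
      simp only [mul_sub, mul_add, mul_one, one_mul, mul_smul_comm, ← Matrix.mul_assoc, h4]
    rw [e1, e2]
    simp only [Matrix.trace_add, Matrix.trace_sub, Matrix.trace_smul]
    rw [Matrix.trace_mul_comm (Bt⁻¹ * Bt⁻¹) B, ← Matrix.mul_assoc,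
      Matrix.trace_mul_comm (B * Bt⁻¹) Bt⁻¹, ← Matrix.mul_assoc]
  · have q1 : (Bt*B).trace = (B*Bt).trace := Matrix.trace_mul_comm Bt B
    have q2 : (B*Bt*B).trace = (Bt*B*B).trace := by
      rw [Matrix.mul_assoc, Matrix.trace_mul_comm B (Bt*B)]
    have q3 : (B*B*Bt).trace = (Bt*B*B).trace := by
      rw [Matrix.mul_assoc, Matrix.trace_mul_comm B (B*Bt)]
      exact q2
    have q5 : (B*Bt*Bt).trace = (Bt*Bt*B).trace := by
      rw [Matrix.mul_assoc, Matrix.trace_mul_comm B (Bt*Bt)]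
    have q4 : (Bt*B*Bt).trace = (Bt*Bt*B).trace := by
      rw [Matrix.mul_assoc, Matrix.trace_mul_comm Bt (B*Bt)]
      exact q5
    simp only [pow_two, mul_sub, sub_mul, mul_add, add_mul, mul_one, one_mul,
      smul_mul_assoc, ← Matrix.mul_assoc, Matrix.trace_add, Matrix.trace_sub,
      Matrix.trace_smul, smul_eq_mul]
    linear_combination 2*q1 + q2 + q3 + 2*q4 - q5
end
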